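/- Let E ⊆ S¹ and K₀ = { r·e : r ∈ [0,1], e ∈ E }. If dim_H E = t ∈ (0,1), suppose for contradiction that there exists a Borel probability measure μ₀ on K₀ with |μ̂₀(ξ)| ≲ |ξ|^{-t₁} for some t₁ > t. Let μ_E be the pushforward of μ₀ under the radial direction map P(x) = x/|x| (defined μ₀-a.e.). Then for each e ∈ S¹ and r ∈ (0,1), μ_E(B(e,r) ∩ S¹) ≤ μ_{⊥e}(B(e,r)), where μ_{⊥e} = (π_e)_# μ₀ with π_e(x) = e + x − (x·e)e. Consequently μ_E satisfies μ_E(B(e,r)) ≲ r^{t₁}, so dim_H E ≥ t₁ > t, a contradiction; hence dim_F K₀ ≤ 2t. -/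

import Mathlib

open MeasureTheory Metric

noncomputable section

abbrev E2 := EuclideanSpace ℝ (Fin 2)

/-- Fourier transform of a finite Borel measure on ℝ². -/
def mFT (μ : Measure E2) (ξ : E2) : ℂ :=
  ∫ x, Complex.exp (-(2 * Real.pi * (inner ℝ x ξ : ℝ)) * Complex.I) ∂μ

/-- The Fourier dimension of a subset of ℝ². -/
def fourierDim (K : Set E2) : ℝ :=
  sSup {s : ℝ | 0 ≤ s ∧ s ≤ 2 ∧ ∃ μ : Measure E2, IsFiniteMeasure μ ∧ μ ≠ 0 ∧ μ Kᶜ = 0 ∧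
    ∃ C : ℝ, ∀ ξ : E2, ξ ≠ 0 → ‖mFT μ ξ‖ ≤ C * ‖ξ‖ ^ (-s / 2)}

/-- The projection `π_e(x) = e + x - (x·e)e` onto the affine line `L_e^⊥`. -/
def projLine (e : E2) (x : E2) : E2 := e + x - (inner ℝ x e : ℝ) • e

/-- The radial direction map `P(x) = x/|x|` (defined a.e.). -/
def radial (x : E2) : E2 := ‖x‖⁻¹ • x


open Filter Topology Finset
open scoped ENNReal NNReal

section Aux
variable {μ₀ : Measure E2}

/-! ### auxiliary character lemmas -/

private def ec (θ : ℝ) : ℂ := Complex.exp ((θ:ℂ) * Complex.I)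

private lemma ec_norm (θ : ℝ) : ‖ec θ‖ = 1 := Complex.norm_exp_ofReal_mul_I θ

private lemma ec_conj (θ : ℝ) : (starRingEnd ℂ) (ec θ) = ec (-θ) := by
  rw [ec, ec, ← Complex.exp_conj]
  congr 1
  simp [Complex.conj_I]

private lemma ec_mul (θ₁ θ₂ : ℝ) : ec θ₁ * ec θ₂ = ec (θ₁ + θ₂) := by
  rw [ec, ec, ec, ← Complex.exp_add]
  congr 1
  push_cast
  ring

private lemma ec_re (θ : ℝ) : (ec θ).re = Real.cos θ := by
  rw [ec]
  simpa using Complex.exp_ofReal_mul_I_re θ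

private lemma ec_cont : Continuous ec := by
  unfold ec; fun_prop

private lemma mFT_eq (μ : Measure E2) (ξ : E2) :
    mFT μ ξ = ∫ x, ec (-(2 * Real.pi * (inner ℝ x ξ : ℝ))) ∂μ := by
  unfold mFT ec
  congr 1
  funext x
  norm_cast

private lemma mFT_norm_le (μ : Measure E2) [IsProbabilityMeasure μ] (ξ : E2) :
    ‖mFT μ ξ‖ ≤ 1 := by
  rw [mFT_eq]
  calc ‖∫ x, ec (-(2 * Real.pi * (inner ℝ x ξ : ℝ))) ∂μ‖
      ≤ ∫ x, ‖ec (-(2 * Real.pi * (inner ℝ x ξ : ℝ)))‖ ∂μ := norm_integral_le_integral_norm _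
    _ = ∫ _x, (1:ℝ) ∂μ := by simp only [ec_norm]
    _ = 1 := by simp

private lemma mFT_zero (μ : Measure E2) [IsProbabilityMeasure μ] : mFT μ 0 = 1 := by
  rw [mFT_eq]
  simp [ec]

lemma sumBound {s : ℝ} (hs0 : 0 < s) (hs1 : s < 1) (N : ℕ) :
    ∑ m ∈ Finset.range N, ((m : ℝ) + 1) ^ (-s) ≤ (N : ℝ) ^ (1 - s) / (1 - s) := by
  have hp0 : (0:ℝ) < 1 - s := by linarith
  induction N with
  | zero => simp [Real.zero_rpow (by linarith : (1:ℝ) - s ≠ 0)]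
  | succ n ih =>
    rw [Finset.sum_range_succ]
    have key : ((n:ℝ)+1) ^ (-s) ≤ (((n:ℝ)+1) ^ (1-s) - (n:ℝ) ^ (1-s)) / (1-s) := by
      have hn1 : (0:ℝ) < (n:ℝ) + 1 := by positivity
      -- Bernoulli: (n/(n+1))^(1-s) ≤ 1 - (1-s)/(n+1)
      have hB : ((n:ℝ) / ((n:ℝ)+1)) ^ (1-s) ≤ 1 - (1-s) / ((n:ℝ)+1) := by
        have h1 : (n:ℝ) / ((n:ℝ)+1) = 1 + (-(1 / ((n:ℝ)+1))) := by field_simp; ring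
        have := rpow_one_add_le_one_add_mul_self
          (s := -(1 / ((n:ℝ)+1))) (by
            rw [neg_le, neg_neg]
            rw [div_le_one hn1]; linarith) (p := 1-s) (by linarith) (by linarith)
        rw [← h1] at this
        calc ((n:ℝ) / ((n:ℝ)+1)) ^ (1-s) ≤ 1 + (1-s) * -(1 / ((n:ℝ)+1)) := this
          _ = 1 - (1-s) / ((n:ℝ)+1) := by ring
      have hdiv : ((n:ℝ)) ^ (1-s) ≤ ((n:ℝ)+1) ^ (1-s) * (1 - (1-s)/((n:ℝ)+1)) := by
        have h2 : ((n:ℝ)) ^ (1-s) = ((n:ℝ)+1) ^ (1-s) * ((n:ℝ)/((n:ℝ)+1)) ^ (1-s) := by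
          rw [← Real.mul_rpow (by positivity) (by positivity)]
          congr 1
          field_simp
        rw [h2]
        exact mul_le_mul_of_nonneg_left hB (by positivity)
      have hA : ((n:ℝ)+1) ^ (1-s) * ((1-s)/((n:ℝ)+1)) ≤ ((n:ℝ)+1) ^ (1-s) - (n:ℝ) ^ (1-s) := by
        nlinarith [hdiv]
      have hA2 : ((n:ℝ)+1) ^ (1-s) * ((1-s)/((n:ℝ)+1)) = (1-s) * ((n:ℝ)+1) ^ (-s) := by
        rw [show -s = (1-s) + (-1) by ring, Real.rpow_add hn1, Real.rpow_neg_one]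
        ring
      rw [hA2] at hA
      rw [le_div_iff₀ hp0]
      linarith
    calc (∑ m ∈ Finset.range n, ((m : ℝ) + 1) ^ (-s)) + ((n:ℝ)+1) ^ (-s)
        ≤ (n : ℝ) ^ (1 - s) / (1 - s) + (((n:ℝ)+1) ^ (1-s) - (n:ℝ) ^ (1-s)) / (1-s) := by
          gcongr
      _ = ((n:ℝ)+1) ^ (1-s) / (1-s) := by ring
      _ = ((n+1 : ℕ) : ℝ) ^ (1-s) / (1-s) := by push_cast; ring_nf


lemma innerSum {s : ℝ} (hs0 : 0 < s) (hs1 : s < 1) {N j : ℕ} (hj : j < N) :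
    ∑ k ∈ Finset.range N \ {j}, |(j:ℝ) - (k:ℝ)| ^ (-s) ≤ 2 * ((N : ℝ) ^ (1 - s) / (1 - s)) := by
  have hsplit : Finset.range N \ {j} = Finset.range j ∪ Finset.Ico (j+1) N := by
    ext k
    simp only [Finset.mem_sdiff, Finset.mem_range, Finset.mem_singleton, Finset.mem_union,
      Finset.mem_Ico]
    omega
  have hdisj : Disjoint (Finset.range j) (Finset.Ico (j+1) N) := by
    rw [Finset.disjoint_left]
    intro k hk hk2
    simp only [Finset.mem_range] at hk
    simp only [Finset.mem_Ico] at hk2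
    omega
  rw [hsplit, Finset.sum_union hdisj]
  have h1 : ∑ k ∈ Finset.range j, |(j:ℝ) - (k:ℝ)| ^ (-s)
      ≤ ∑ m ∈ Finset.range N, ((m : ℝ) + 1) ^ (-s) := by
    have e1 : ∀ k ∈ Finset.range j, |(j:ℝ) - (k:ℝ)| ^ (-s) = (((j - k : ℕ) : ℝ)) ^ (-s) := by
      intro k hk
      simp only [Finset.mem_range] at hk
      rw [Nat.cast_sub hk.le, abs_of_nonneg (by
        have : (k:ℝ) ≤ (j:ℝ) := by exact_mod_cast hk.le
        linarith)]
    rw [Finset.sum_congr rfl e1, ← Finset.sum_range_reflect]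
    have e2 : ∀ i ∈ Finset.range j, (((j - (j - 1 - i) : ℕ) : ℝ)) ^ (-s) = ((i:ℝ) + 1) ^ (-s) := by
      intro i hi
      simp only [Finset.mem_range] at hi
      have : j - (j - 1 - i) = i + 1 := by omega
      rw [this]; push_cast; ring_nf
    rw [Finset.sum_congr rfl e2]
    apply Finset.sum_le_sum_of_subset_of_nonneg (Finset.range_subset_range.2 hj.le)
    intro i _ _; positivity
  have h2 : ∑ k ∈ Finset.Ico (j+1) N, |(j:ℝ) - (k:ℝ)| ^ (-s)
      ≤ ∑ m ∈ Finset.range N, ((m : ℝ) + 1) ^ (-s) := by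
    rw [Finset.sum_Ico_eq_sum_range]
    have e1 : ∀ i ∈ Finset.range (N - (j+1)), |(j:ℝ) - ((j+1+i : ℕ):ℝ)| ^ (-s)
        = ((i:ℝ) + 1) ^ (-s) := by
      intro i _
      have : |(j:ℝ) - ((j+1+i : ℕ):ℝ)| = (i:ℝ) + 1 := by
        push_cast
        rw [abs_of_nonpos (by linarith)]
        ring
      rw [this]
    rw [Finset.sum_congr rfl e1]
    apply Finset.sum_le_sum_of_subset_of_nonneg (Finset.range_subset_range.2 (by omega))
    intro i _ _; positivity
  have hS := sumBound hs0 hs1 N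
  linarith


lemma core (μ₀ : Measure E2) [IsProbabilityMeasure μ₀] {C s : ℝ} (hC : 1 ≤ C)
    (hs0 : 0 < s) (hs1 : s < 1)
    (hdecay : ∀ ξ : E2, ξ ≠ 0 → ‖mFT μ₀ ξ‖ ≤ C * ‖ξ‖ ^ (-s))
    (e' : E2) (he' : ‖e'‖ = 1) (r : ℝ) (hr : 0 < r) :
    μ₀ {x : E2 | |(inner ℝ x e' : ℝ)| ≤ r} ≤ ENNReal.ofReal (64 * C / (1 - s) * r ^ s) := by
  have hs1' : (0:ℝ) < 1 - s := by linarith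
  set y : E2 → ℝ := fun x => (inner ℝ x e' : ℝ) with hy
  have hy_cont : Continuous y := continuous_id.inner continuous_const
  set S : Set E2 := {x : E2 | |y x| ≤ r} with hSdef
  have hS : MeasurableSet S := (isClosed_le (hy_cont.abs) continuous_const).measurableSet
  have hμS_ne : μ₀ S ≠ ⊤ := measure_ne_top _ _
  set m : ℝ := (μ₀ S).toReal with hm
  have hm0 : 0 ≤ m := ENNReal.toReal_nonneg
  have key : ∀ N : ℕ, 1 ≤ N → m * ((N:ℝ)/2)^2 ≤ N + 16*C/(1-s) * (N:ℝ)^2 * r^s := by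
    intro N hN
    have hN0 : (0:ℝ) < N := by exact_mod_cast hN
    set a : ℝ := (8 * (N:ℝ) * r)⁻¹ with ha
    have ha0 : 0 < a := by positivity
    set G : E2 → ℂ := fun x => ∑ k ∈ Finset.range N, ec (-(2*Real.pi*((k:ℝ) * (a * y x)))) with hG
    set f : E2 → ℝ := fun x => ‖G x‖^2 with hf
    have hG_cont : Continuous G := by
      apply continuous_finset_sum
      intro k _
      exact ec_cont.comp (by fun_prop)
    have hf_cont : Continuous f := (hG_cont.norm).pow 2
    have hG_norm : ∀ x, ‖G x‖ ≤ N := by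
      intro x
      calc ‖G x‖ ≤ ∑ k ∈ Finset.range N, ‖ec (-(2*Real.pi*((k:ℝ) * (a * y x))))‖ :=
            norm_sum_le _ _
        _ = ∑ _k ∈ Finset.range N, (1:ℝ) := Finset.sum_congr rfl fun k _ => ec_norm _
        _ = N := by simp
    have hf_int : Integrable f μ₀ := by
      apply Integrable.mono' (integrable_const ((N:ℝ)^2)) hf_cont.aestronglyMeasurable
      filter_upwards with x
      rw [Real.norm_eq_abs, abs_of_nonneg (sq_nonneg _)]
      exact pow_le_pow_left₀ (norm_nonneg _) (hG_norm x) 2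
    -- lower bound on S
    have hlow : ∀ x ∈ S, ((N:ℝ)/2)^2 ≤ f x := by
      intro x hx
      have hyx : |y x| ≤ r := hx
      have hcos : ∀ k ∈ Finset.range N, (1:ℝ)/2 ≤ Real.cos (-(2*Real.pi*((k:ℝ) * (a * y x)))) := by
        intro k hk
        set θ : ℝ := -(2*Real.pi*((k:ℝ) * (a * y x))) with hθ
        have hkN : (k:ℝ) ≤ N := by
          have := Finset.mem_range.1 hk; exact_mod_cast this.le
        have habs : |θ| ≤ Real.pi/4 := by
          have hpi := Real.pi_pos
          have h1 : |θ| = 2*Real.pi * ((k:ℝ) * (a * |y x|)) := by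
            rw [hθ, abs_neg, abs_mul, abs_mul, abs_mul, abs_mul,
              abs_of_nonneg (show (0:ℝ) ≤ (2:ℝ) by norm_num),
              abs_of_nonneg Real.pi_pos.le, Nat.abs_cast,
              abs_of_nonneg ha0.le]
          have h2 : 2*Real.pi * ((k:ℝ) * (a * |y x|)) ≤ 2*Real.pi * ((N:ℝ) * (a * r)) := by
            apply mul_le_mul_of_nonneg_left _ (by positivity : (0:ℝ) ≤ 2*Real.pi)
            exact mul_le_mul hkN (mul_le_mul_of_nonneg_left hyx ha0.le)
              (by positivity) (by positivity)
          have h3 : 2*Real.pi * ((N:ℝ) * (a * r)) = Real.pi/4 := by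
            rw [ha]
            field_simp
            ring
          rw [h1]; rw [h3] at h2; exact h2
        have h2 : θ^2 ≤ (Real.pi/4)^2 := by
          have := abs_le.1 habs
          exact sq_le_sq' (this.1) (this.2)
        have h3 : (Real.pi/4)^2 ≤ 1 := by
          nlinarith [Real.pi_le_four, Real.pi_pos]
        calc (1:ℝ)/2 ≤ 1 - θ^2/2 := by nlinarith
          _ ≤ Real.cos θ := Real.one_sub_sq_div_two_le_cos
      have hre : (N:ℝ)/2 ≤ (G x).re := by
        rw [hG]
        rw [Complex.re_sum]
        calc (N:ℝ)/2 = ∑ _k ∈ Finset.range N, (1:ℝ)/2 := by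
              simp [Finset.sum_const]; ring
          _ ≤ ∑ k ∈ Finset.range N, (ec (-(2*Real.pi*((k:ℝ) * (a * y x))))).re := by
              apply Finset.sum_le_sum
              intro k hk
              rw [ec_re]
              exact hcos k hk
      have hnorm : (N:ℝ)/2 ≤ ‖G x‖ := by
        calc (N:ℝ)/2 ≤ (G x).re := hre
          _ ≤ |(G x).re| := le_abs_self _
          _ ≤ ‖G x‖ := Complex.abs_re_le_norm _
      calc ((N:ℝ)/2)^2 ≤ ‖G x‖^2 := by
            apply pow_le_pow_left₀ (by positivity) hnorm
        _ = f x := rfl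
    have hlowInt : ((N:ℝ)/2)^2 * m ≤ ∫ x, f x ∂μ₀ := by
      calc ((N:ℝ)/2)^2 * m ≤ ∫ x in S, f x ∂μ₀ :=
            by have h := setIntegral_ge_of_const_le hS hμS_ne hlow hf_int.integrableOn
               rw [smul_eq_mul, mul_comm] at h; exact h
        _ ≤ ∫ x, f x ∂μ₀ :=
            setIntegral_le_integral hf_int (Filter.Eventually.of_forall fun x => sq_nonneg _)
    -- Fourier side
    have hint' : ∀ g : E2 → ℝ, Continuous g → Integrable (fun x => ec (g x)) μ₀ := by
      intro g hg
      apply Integrable.mono' (integrable_const (1:ℝ)) ((ec_cont.comp hg).aestronglyMeasurable)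
      filter_upwards with x
      exact le_of_eq (ec_norm _)
    have hinner : ∀ w : ℝ, (∫ x, ec (-(2*Real.pi*(w * y x))) ∂μ₀) = mFT μ₀ (w • e') := by
      intro w
      rw [mFT_eq]
      congr 1
      funext x
      congr 1
      show -(2*Real.pi*(w * (inner ℝ x e' : ℝ))) = -(2 * Real.pi * (inner ℝ x (w • e') : ℝ))
      rw [real_inner_smul_right]
    have hexpand : ((∫ x, f x ∂μ₀ : ℝ) : ℂ)
        = ∑ j ∈ Finset.range N, ∑ k ∈ Finset.range N,
            mFT μ₀ ((a * ((j:ℝ) - (k:ℝ))) • e') := by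
      have e1 : ∀ x : E2, ((f x : ℝ) : ℂ) = G x * (starRingEnd ℂ) (G x) := by
        intro x
        have hreal : f x = Complex.normSq (G x) := by
          show ‖G x‖^2 = Complex.normSq (G x)
          rw [Complex.normSq_eq_norm_sq]
        rw [Complex.mul_conj, hreal]
      have e2 : ∀ x : E2, G x * (starRingEnd ℂ) (G x)
          = ∑ j ∈ Finset.range N, ∑ k ∈ Finset.range N,
              ec (-(2*Real.pi*((a * ((j:ℝ) - (k:ℝ))) * y x))) := by
        intro x
        rw [hG]
        simp only [map_sum, ec_conj, Finset.sum_mul_sum]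
        apply Finset.sum_congr rfl; intro j _
        apply Finset.sum_congr rfl; intro k _
        rw [ec_mul]
        congr 1
        ring
      calc ((∫ x, f x ∂μ₀ : ℝ) : ℂ) = ∫ x, ((f x : ℝ) : ℂ) ∂μ₀ := (integral_ofReal).symm
        _ = ∫ x, (∑ j ∈ Finset.range N, ∑ k ∈ Finset.range N,
              ec (-(2*Real.pi*((a * ((j:ℝ) - (k:ℝ))) * y x)))) ∂μ₀ := by
            congr 1; funext x; rw [e1 x, e2 x]
        _ = ∑ j ∈ Finset.range N, ∫ x, (∑ k ∈ Finset.range N,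
              ec (-(2*Real.pi*((a * ((j:ℝ) - (k:ℝ))) * y x)))) ∂μ₀ :=
            integral_finset_sum _ (fun j _ => integrable_finset_sum _
              (fun k _ => hint' _ (by fun_prop)))
        _ = ∑ j ∈ Finset.range N, ∑ k ∈ Finset.range N,
              ∫ x, ec (-(2*Real.pi*((a * ((j:ℝ) - (k:ℝ))) * y x))) ∂μ₀ :=
            Finset.sum_congr rfl (fun j _ => integral_finset_sum _
              (fun k _ => hint' _ (by fun_prop)))
        _ = ∑ j ∈ Finset.range N, ∑ k ∈ Finset.range N,
              mFT μ₀ ((a * ((j:ℝ) - (k:ℝ))) • e') :=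
            Finset.sum_congr rfl (fun j _ => Finset.sum_congr rfl (fun k _ => hinner _))
    have harith : (N:ℝ) * (C * a^(-s) * (2*((N:ℝ)^(1-s)/(1-s)))) ≤ 16*C/(1-s) * (N:ℝ)^2 * r^s := by
      have hC0 : (0:ℝ) < C := lt_of_lt_of_le one_pos hC
      have h8 : a^(-s) = (8*(N:ℝ)*r)^s := by
        rw [ha, Real.inv_rpow (by positivity), ← Real.rpow_neg (by positivity), neg_neg]
      have h9 : (8*(N:ℝ)*r)^s = 8^s * (N:ℝ)^s * r^s := by
        rw [Real.mul_rpow (by positivity) hr.le, Real.mul_rpow (by norm_num) (Nat.cast_nonneg N)]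
      have h10 : (N:ℝ)^s * (N:ℝ)^(1-s) = N := by
        rw [← Real.rpow_add hN0]
        norm_num
      have h11 : (8:ℝ)^s ≤ 8 := by
        calc (8:ℝ)^s ≤ (8:ℝ)^(1:ℝ) := Real.rpow_le_rpow_of_exponent_le (by norm_num) hs1.le
          _ = 8 := Real.rpow_one _
      calc (N:ℝ) * (C * a^(-s) * (2*((N:ℝ)^(1-s)/(1-s))))
          = (2*C/(1-s)) * (8:ℝ)^s * ((N:ℝ)^s * (N:ℝ)^(1-s)) * ((N:ℝ) * r^s) := by
            rw [h8, h9]; field_simp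
        _ = (2*C/(1-s)) * (8:ℝ)^s * ((N:ℝ)^2 * r^s) := by rw [h10]; ring
        _ ≤ (2*C/(1-s)) * 8 * ((N:ℝ)^2 * r^s) := by
            have hnn : (0:ℝ) ≤ (N:ℝ)^2 * r^s := by positivity
            have hcc : (0:ℝ) ≤ 2*C/(1-s) := by positivity
            apply mul_le_mul_of_nonneg_right _ hnn
            exact mul_le_mul_of_nonneg_left h11 hcc
        _ = 16*C/(1-s) * (N:ℝ)^2 * r^s := by ring
    have hrow : ∀ j ∈ Finset.range N,
        ‖∑ k ∈ Finset.range N, mFT μ₀ ((a * ((j:ℝ)-(k:ℝ))) • e')‖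
        ≤ 1 + C * a^(-s) * (2 * ((N:ℝ)^(1-s)/(1-s))) := by
      intro j hj
      have hterm : ∀ k ∈ Finset.range N \ {j},
          ‖mFT μ₀ ((a * ((j:ℝ)-(k:ℝ))) • e')‖ ≤ C * a^(-s) * |(j:ℝ)-(k:ℝ)|^(-s) := by
        intro k hk
        have hkj : k ≠ j := by
          have := (Finset.mem_sdiff.1 hk).2
          simpa using this
        have hne : ((j:ℝ) - (k:ℝ)) ≠ 0 := by
          intro h
          apply hkj
          have : (j:ℝ) = (k:ℝ) := by linarith
          exact_mod_cast this.symm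
        have he'0 : e' ≠ 0 := by
          intro h
          rw [h, norm_zero] at he'
          norm_num at he'
        have hξ : (a * ((j:ℝ)-(k:ℝ))) • e' ≠ 0 :=
          smul_ne_zero (mul_ne_zero ha0.ne' hne) he'0
        have hnorm : ‖(a * ((j:ℝ)-(k:ℝ))) • e'‖ = a * |(j:ℝ)-(k:ℝ)| := by
          rw [norm_smul, he', Real.norm_eq_abs, abs_mul, abs_of_pos ha0, mul_one]
        calc ‖mFT μ₀ ((a * ((j:ℝ)-(k:ℝ))) • e')‖
            ≤ C * ‖(a * ((j:ℝ)-(k:ℝ))) • e'‖^(-s) := hdecay _ hξ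
          _ = C * a^(-s) * |(j:ℝ)-(k:ℝ)|^(-s) := by
              rw [hnorm, Real.mul_rpow ha0.le (abs_nonneg _)]
              ring
      calc ‖∑ k ∈ Finset.range N, mFT μ₀ ((a * ((j:ℝ)-(k:ℝ))) • e')‖
          ≤ ∑ k ∈ Finset.range N, ‖mFT μ₀ ((a * ((j:ℝ)-(k:ℝ))) • e')‖ := norm_sum_le _ _
        _ = (∑ k ∈ Finset.range N \ {j}, ‖mFT μ₀ ((a * ((j:ℝ)-(k:ℝ))) • e')‖)
            + ‖mFT μ₀ ((a * ((j:ℝ)-(j:ℝ))) • e')‖ :=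
            Finset.sum_eq_sum_sdiff_singleton_add hj _
        _ ≤ (∑ k ∈ Finset.range N \ {j}, C * a^(-s) * |(j:ℝ)-(k:ℝ)|^(-s)) + 1 := by
            apply add_le_add (Finset.sum_le_sum hterm)
            have : (a * ((j:ℝ)-(j:ℝ))) • e' = 0 := by
              rw [sub_self, mul_zero, zero_smul]
            rw [this, mFT_zero, norm_one]
        _ = C * a^(-s) * (∑ k ∈ Finset.range N \ {j}, |(j:ℝ)-(k:ℝ)|^(-s)) + 1 := by
            rw [Finset.mul_sum]
        _ ≤ C * a^(-s) * (2 * ((N:ℝ)^(1-s)/(1-s))) + 1 := by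
            apply add_le_add_left
            apply mul_le_mul_of_nonneg_left (innerSum hs0 hs1 (Finset.mem_range.1 hj))
            positivity
        _ = 1 + C * a^(-s) * (2 * ((N:ℝ)^(1-s)/(1-s))) := by ring
    have hbound : ‖∑ j ∈ Finset.range N, ∑ k ∈ Finset.range N,
        mFT μ₀ ((a * ((j:ℝ)-(k:ℝ))) • e')‖ ≤ N + 16*C/(1-s) * (N:ℝ)^2 * r^s := by
      calc ‖∑ j ∈ Finset.range N, ∑ k ∈ Finset.range N, mFT μ₀ ((a * ((j:ℝ)-(k:ℝ))) • e')‖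
          ≤ ∑ j ∈ Finset.range N, ‖∑ k ∈ Finset.range N, mFT μ₀ ((a * ((j:ℝ)-(k:ℝ))) • e')‖ :=
            norm_sum_le _ _
        _ ≤ ∑ _j ∈ Finset.range N, (1 + C * a^(-s) * (2 * ((N:ℝ)^(1-s)/(1-s)))) :=
            Finset.sum_le_sum hrow
        _ = N * (1 + C * a^(-s) * (2 * ((N:ℝ)^(1-s)/(1-s)))) := by
            rw [Finset.sum_const, Finset.card_range, nsmul_eq_mul]
        _ = N + (N:ℝ) * (C * a^(-s) * (2 * ((N:ℝ)^(1-s)/(1-s)))) := by ring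
        _ ≤ N + 16*C/(1-s) * (N:ℝ)^2 * r^s := by linarith [harith]
    have hval : (∫ x, f x ∂μ₀) ≤ N + 16*C/(1-s) * (N:ℝ)^2 * r^s := by
      have h2 : (∫ x, f x ∂μ₀) = ‖((∫ x, f x ∂μ₀ : ℝ) : ℂ)‖ := by
        rw [Complex.norm_real, Real.norm_eq_abs,
          abs_of_nonneg (integral_nonneg (fun x => sq_nonneg _))]
      rw [h2, hexpand]
      exact hbound
    calc m * ((N:ℝ)/2)^2 = ((N:ℝ)/2)^2 * m := by ring
      _ ≤ ∫ x, f x ∂μ₀ := hlowInt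
      _ ≤ N + 16*C/(1-s) * (N:ℝ)^2 * r^s := hval
  have hlim : m ≤ 64*C/(1-s) * r^s := by
    have hstep : ∀ N : ℕ, 1 ≤ N → m ≤ 4/(N:ℝ) + 64*C/(1-s)*r^s := by
      intro N hN
      have hN0 : (0:ℝ) < N := by exact_mod_cast hN
      have h2 := key N hN
      have h3 : m * ((N:ℝ)/2)^2 ≤ (4/(N:ℝ) + 64*C/(1-s)*r^s) * ((N:ℝ)/2)^2 := by
        calc m * ((N:ℝ)/2)^2 ≤ N + 16*C/(1-s) * (N:ℝ)^2 * r^s := h2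
          _ = (4/(N:ℝ) + 64*C/(1-s)*r^s) * ((N:ℝ)/2)^2 := by field_simp; ring
      exact le_of_mul_le_mul_right h3 (by positivity)
    have htend : Filter.Tendsto (fun N : ℕ => 4/(N:ℝ) + 64*C/(1-s)*r^s)
        Filter.atTop (𝓝 (0 + 64*C/(1-s)*r^s)) :=
      (tendsto_const_div_atTop_nhds_zero_nat 4).add tendsto_const_nhds
    have hle := ge_of_tendsto htend (by
      filter_upwards [Filter.eventually_ge_atTop 1] with N hN using hstep N hN)
    linarith
  calc μ₀ S = ENNReal.ofReal m := (ENNReal.ofReal_toReal hμS_ne).symm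
    _ ≤ ENNReal.ofReal (64 * C / (1-s) * r ^ s) := ENNReal.ofReal_le_ofReal (by linarith)



def rot (e : E2) : E2 := (WithLp.equiv 2 (Fin 2 → ℝ)).symm ![-(e 1), e 0]

lemma rot_apply0 (e : E2) : rot e 0 = -(e 1) := rfl
lemma rot_apply1 (e : E2) : rot e 1 = e 0 := rfl

lemma sum_sq_of_unit (e : E2) (he : ‖e‖ = 1) : e 0 * e 0 + e 1 * e 1 = 1 := by
  have h : (inner ℝ e e : ℝ) = 1 := by rw [real_inner_self_eq_norm_sq, he]; norm_num
  rw [PiLp.inner_apply] at h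
  simpa [Fin.sum_univ_two, RCLike.inner_apply, conj_trivial, ← pow_two] using h

lemma norm_rot (e : E2) (he : ‖e‖ = 1) : ‖rot e‖ = 1 := by
  have h : (inner ℝ (rot e) (rot e) : ℝ) = 1 := by
    rw [PiLp.inner_apply]
    simp only [Fin.sum_univ_two, RCLike.inner_apply, conj_trivial, rot_apply0, rot_apply1]
    have := sum_sq_of_unit e he
    ring_nf
    ring_nf at this
    linarith
  have h2 := real_inner_self_eq_norm_sq (rot e)
  rw [h] at h2
  nlinarith [norm_nonneg (rot e)]

lemma rot_identity (e : E2) (he : ‖e‖ = 1) (u : E2) :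
    u - ((inner ℝ u e : ℝ)) • e = ((inner ℝ u (rot e) : ℝ)) • rot e := by
  have hs := sum_sq_of_unit e he
  ext i
  have hinner1 : (inner ℝ u e : ℝ) = u 0 * e 0 + u 1 * e 1 := by
    rw [PiLp.inner_apply]
    simp [Fin.sum_univ_two, RCLike.inner_apply, conj_trivial]; ring
  have hinner2 : (inner ℝ u (rot e) : ℝ) = u 0 * (-(e 1)) + u 1 * e 0 := by
    rw [PiLp.inner_apply]
    simp [Fin.sum_univ_two, RCLike.inner_apply, conj_trivial, rot_apply0, rot_apply1]; ring
  fin_cases i <;>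
    simp only [Fin.mk_zero, Fin.mk_one, Fin.isValue, PiLp.sub_apply, PiLp.smul_apply,
      smul_eq_mul, hinner1, hinner2, rot_apply0, rot_apply1]
  · linear_combination (- u 0) * hs
  · linear_combination (- u 1) * hs

lemma contract (e : E2) (he : ‖e‖ = 1) (w : E2) :
    ‖w - ((inner ℝ w e : ℝ)) • e‖ ≤ ‖w‖ := by
  set c : ℝ := (inner ℝ w e : ℝ) with hc
  have h := norm_sub_sq_real w (c • e)
  rw [norm_smul, he, Real.norm_eq_abs, mul_one, real_inner_smul_right] at h
  have h2 : ‖w - c • e‖^2 = ‖w‖^2 - c^2 := by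
    rw [h, ← hc, sq_abs]; ring
  nlinarith [norm_nonneg (w - c • e), norm_nonneg w, sq_nonneg c]

lemma proj_dist (e : E2) (he : ‖e‖ = 1) (u : E2) :
    ‖u - ((inner ℝ u e : ℝ)) • e‖ ≤ ‖u - e‖ := by
  have hB : u - ((inner ℝ u e : ℝ)) • e
      = (u - e) - ((inner ℝ (u - e) e : ℝ)) • e := by
    have h1 : (inner ℝ (u - e) e : ℝ) = (inner ℝ u e : ℝ) - 1 := by
      rw [inner_sub_left]
      have h2 : (inner ℝ e e : ℝ) = 1 := by rw [real_inner_self_eq_norm_sq, he]; norm_num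
      rw [h2]
    rw [h1, sub_smul, one_smul]
    abel
  rw [hB]
  exact contract e he (u - e)

lemma radial_smul (s : ℝ) (hs : 0 < s) (u : E2) (hu : ‖u‖ = 1) : radial (s • u) = u := by
  rw [radial, norm_smul, hu, mul_one, Real.norm_eq_abs, abs_of_pos hs, smul_smul,
    inv_mul_cancel₀ hs.ne', one_smul]

lemma radial_zero : radial (0 : E2) = 0 := by
  rw [radial, smul_zero]


end Aux

lemma abs_inner_rot (e : E2) (he : ‖e‖ = 1) (u : E2) :
    |(inner ℝ u (rot e) : ℝ)| = ‖u - ((inner ℝ u e : ℝ)) • e‖ := by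
  calc |(inner ℝ u (rot e) : ℝ)| = |(inner ℝ u (rot e) : ℝ)| * ‖rot e‖ := by
        rw [norm_rot e he, mul_one]
    _ = ‖((inner ℝ u (rot e) : ℝ)) • rot e‖ := by rw [norm_smul, Real.norm_eq_abs]
    _ = ‖u - ((inner ℝ u e : ℝ)) • e‖ := by rw [← rot_identity e he u]

lemma geom_inclusion (E : Set E2) (hE : E ⊆ sphere (0:E2) 1)
    (K₀ : Set E2) (hK₀ : K₀ = {x : E2 | ∃ r ∈ Set.Icc (0:ℝ) 1, ∃ e ∈ E, x = r • e})
    (e : E2) (he : ‖e‖ = 1) (r : ℝ) :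
    ∀ x ∈ K₀, radial x ∈ closedBall e r ∩ sphere (0:E2) 1 →
      ‖x - ((inner ℝ x e : ℝ)) • e‖ ≤ r := by
  intro x hx hmem
  obtain ⟨hball, hsph⟩ := hmem
  rw [hK₀] at hx
  obtain ⟨s', ⟨hs0, hs1⟩, u, huE, rfl⟩ := hx
  have hu : ‖u‖ = 1 := by
    have := hE huE
    rwa [mem_sphere_zero_iff_norm] at this
  rcases hs0.eq_or_lt with heq | hpos
  · exfalso
    rw [← heq, zero_smul, radial_zero, mem_sphere_zero_iff_norm, norm_zero] at hsph
    norm_num at hsph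
  · have hrad : radial (s' • u) = u := radial_smul s' hpos u hu
    rw [hrad] at hball
    have hue : ‖u - e‖ ≤ r := by
      rw [mem_closedBall, dist_eq_norm] at hball
      exact hball
    have hexp : s' • u - ((inner ℝ (s' • u) e : ℝ)) • e
        = s' • (u - ((inner ℝ u e : ℝ)) • e) := by
      rw [real_inner_smul_left, mul_smul, ← smul_sub]
    rw [hexp, norm_smul, Real.norm_eq_abs, abs_of_pos hpos]
    calc s' * ‖u - ((inner ℝ u e : ℝ)) • e‖ ≤ 1 * ‖u - e‖ :=
          mul_le_mul hs1 (proj_dist e he u) (norm_nonneg _) zero_le_one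
        _ ≤ r := by rw [one_mul]; exact hue

lemma radial_meas : Measurable radial := by
  refine Measurable.smul (f := fun x : E2 => ‖x‖⁻¹) (g := id) ?_ ?_
  · exact measurable_norm.inv
  · exact measurable_id

lemma atom_lt (μ₀ : Measure E2) [IsProbabilityMeasure μ₀] {t₁ C : ℝ}
    (ht₁ : 0 < t₁) (hC : 0 < C)
    (hdecay : ∀ ξ : E2, ξ ≠ 0 → ‖mFT μ₀ ξ‖ ≤ C * ‖ξ‖ ^ (-t₁)) :
    μ₀ {(0:E2)} < 1 := by
  by_contra hcon
  push_neg at hcon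
  have h1 : μ₀ {(0:E2)} = 1 := le_antisymm prob_le_one hcon
  have h0c : μ₀ ({(0:E2)}ᶜ) = 0 := by
    rw [prob_compl_eq_one_sub (measurableSet_singleton _), h1, tsub_self]
  have hae : ∀ᵐ x ∂μ₀, x = (0:E2) := by
    rw [ae_iff]
    have hset : {a : E2 | ¬ a = 0} = ({(0:E2)}ᶜ : Set E2) := by ext a; simp
    rw [hset]
    exact h0c
  have hval : ∀ ξ : E2, mFT μ₀ ξ = 1 := by
    intro ξ
    rw [mFT_eq]
    have : (∫ x, ec (-(2 * Real.pi * (inner ℝ x ξ : ℝ))) ∂μ₀) = ∫ _x, (1:ℂ) ∂μ₀ := by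
      apply integral_congr_ae
      filter_upwards [hae] with x hx
      subst hx
      simp [ec, inner_zero_left]
    rw [this]
    simp
  set e₀ : E2 := EuclideanSpace.single (0 : Fin 2) (1:ℝ) with he₀
  set R : ℝ := C ^ (1/t₁) + 1 with hR
  have hR0 : 0 < R := by
    have : (0:ℝ) ≤ C ^ (1/t₁) := Real.rpow_nonneg hC.le _
    rw [hR]; linarith
  set ξ : E2 := R • e₀ with hξ
  have hξn : ‖ξ‖ = R := by
    rw [hξ, norm_smul, he₀, EuclideanSpace.norm_single, norm_one, mul_one,
      Real.norm_eq_abs, abs_of_pos hR0]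
  have hξ0 : ξ ≠ 0 := by
    intro h
    rw [h, norm_zero] at hξn
    linarith
  have hb := hdecay ξ hξ0
  rw [hval ξ, norm_one, hξn] at hb
  have hRC : C < R ^ t₁ := by
    calc C = (C ^ (1/t₁)) ^ t₁ := by
          rw [← Real.rpow_mul hC.le, one_div_mul_cancel ht₁.ne', Real.rpow_one]
      _ < R ^ t₁ := by
          apply Real.rpow_lt_rpow (Real.rpow_nonneg hC.le _) _ ht₁
          rw [hR]; linarith
  have : C * R ^ (-t₁) < 1 := by
    rw [Real.rpow_neg hR0.le]
    rw [← div_eq_mul_inv, div_lt_one (by positivity)]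
    exact hRC
  linarith

/-- Upper bound `dim_F K₀ ≤ 2t` for the restricted Kakeya set
`K₀ = { r·e : r ∈ [0,1], e ∈ E }` over a direction set of Hausdorff dimension `t ∈ (0,1)`,
via the comparison `μ_E(B(e,r) ∩ S¹) ≤ μ_{⊥e}(B(e,r))` between the direction pushforward
and the orthogonal-projection pushforward of any candidate measure `μ₀`. -/
theorem stmt15 (E : Set E2) (hE : E ⊆ sphere (0:E2) 1)
    (t : ℝ) (ht : t ∈ Set.Ioo (0:ℝ) 1) (hdim : dimH E = ENNReal.ofReal t)
    (K₀ : Set E2) (hK₀ : K₀ = {x : E2 | ∃ r ∈ Set.Icc (0:ℝ) 1, ∃ e ∈ E, x = r • e}) :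
    (∀ (μ₀ : Measure E2), IsProbabilityMeasure μ₀ → μ₀ K₀ᶜ = 0 →
      ∀ e : E2, ‖e‖ = 1 → ∀ r : ℝ, r ∈ Set.Ioo (0:ℝ) 1 →
        Measure.map radial μ₀ (closedBall e r ∩ sphere (0:E2) 1) ≤
          Measure.map (projLine e) μ₀ (closedBall e r)) ∧
    (¬ ∃ (μ₀ : Measure E2) (t₁ C : ℝ), IsProbabilityMeasure μ₀ ∧ μ₀ K₀ᶜ = 0 ∧ t < t₁ ∧
      0 < C ∧ ∀ ξ : E2, ξ ≠ 0 → ‖mFT μ₀ ξ‖ ≤ C * ‖ξ‖ ^ (-t₁)) ∧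
    fourierDim K₀ ≤ 2 * t := by
  have hsphere_meas : MeasurableSet (sphere (0:E2) 1) := isClosed_sphere.measurableSet
  have hpart2 : ¬ ∃ (μ₀ : Measure E2) (t₁ C : ℝ), IsProbabilityMeasure μ₀ ∧ μ₀ K₀ᶜ = 0 ∧
      t < t₁ ∧ 0 < C ∧ ∀ ξ : E2, ξ ≠ 0 → ‖mFT μ₀ ξ‖ ≤ C * ‖ξ‖ ^ (-t₁) := by
    rintro ⟨μ₀, t₁, C, hprob, hnull, htt₁, hCpos, hdecay⟩
    haveI := hprob
    have ht0 := ht.1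
    have ht1 := ht.2
    have ht₁0 : 0 < t₁ := ht0.trans htt₁
    set s : ℝ := (t + min t₁ 1)/2 with hs
    have hmin : t < min t₁ 1 := lt_min htt₁ ht1
    have hts : t < s := by rw [hs]; linarith
    have hs0 : 0 < s := ht0.trans hts
    have hs1 : s < 1 := by
      have h := min_le_right t₁ 1
      rw [hs]; linarith
    have hst₁ : s ≤ t₁ := by
      have h := min_le_left t₁ 1
      rw [hs]; linarith
    set C₁ : ℝ := max C 1 with hC₁
    have hC₁1 : 1 ≤ C₁ := le_max_right _ _
    have hC₁0 : 0 < C₁ := lt_of_lt_of_le one_pos hC₁1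
    have hdecay' : ∀ ξ : E2, ξ ≠ 0 → ‖mFT μ₀ ξ‖ ≤ C₁ * ‖ξ‖ ^ (-s) := by
      intro ξ hξ
      have hξn : 0 < ‖ξ‖ := norm_pos_iff.2 hξ
      by_cases h1 : 1 ≤ ‖ξ‖
      · calc ‖mFT μ₀ ξ‖ ≤ C * ‖ξ‖ ^ (-t₁) := hdecay ξ hξ
          _ ≤ C * ‖ξ‖ ^ (-s) := by
              apply mul_le_mul_of_nonneg_left _ hCpos.le
              exact Real.rpow_le_rpow_of_exponent_le h1 (by linarith)
          _ ≤ C₁ * ‖ξ‖ ^ (-s) :=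
              mul_le_mul_of_nonneg_right (le_max_left _ _) (Real.rpow_nonneg hξn.le _)
      · push_neg at h1
        calc ‖mFT μ₀ ξ‖ ≤ 1 := mFT_norm_le μ₀ ξ
          _ ≤ C₁ * ‖ξ‖ ^ (-s) := by
              have h2 : 1 ≤ ‖ξ‖ ^ (-s) :=
                Real.one_le_rpow_of_pos_of_le_one_of_nonpos hξn h1.le (by linarith)
              calc (1:ℝ) = 1 * 1 := by ring
                _ ≤ C₁ * ‖ξ‖ ^ (-s) := mul_le_mul hC₁1 h2 zero_le_one hC₁0.le
    set K : ℝ := 64 * C₁ / (1-s) with hKd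
    have h1s : (0:ℝ) < 1 - s := by linarith
    have hK0 : 0 < K := by rw [hKd]; positivity
    have hFrost : ∀ e' : E2, ‖e'‖ = 1 → ∀ r : ℝ, 0 < r →
        μ₀ {x : E2 | |(inner ℝ x e' : ℝ)| ≤ r} ≤ ENNReal.ofReal (64 * C₁ / (1-s) * r ^ s) :=
      fun e' he' r hr => core μ₀ hC₁1 hs0 hs1 hdecay' e' he' r hr
    set ν : Measure E2 := (Measure.map radial μ₀).restrict (sphere (0:E2) 1) with hν
    have hν_ball : ∀ (x : E2) (r : ℝ), 0 < r →
        ν (closedBall x r) ≤ ENNReal.ofReal (2*K * r^s) := by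
      intro x r hr
      rw [hν, Measure.restrict_apply measurableSet_closedBall]
      rcases Set.eq_empty_or_nonempty (closedBall x r ∩ sphere (0:E2) 1) with hemp | hne
      · rw [hemp]; simp
      · obtain ⟨e, he1, he2⟩ := hne
        have he : ‖e‖ = 1 := mem_sphere_zero_iff_norm.1 he2
        have hsub : closedBall x r ∩ sphere (0:E2) 1
            ⊆ closedBall e (2*r) ∩ sphere (0:E2) 1 := by
          rintro z ⟨hz1, hz2⟩
          refine ⟨?_, hz2⟩
          rw [mem_closedBall] at *
          calc dist z e ≤ dist z x + dist x e := dist_triangle _ _ _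
            _ ≤ r + r := add_le_add hz1 (by rw [dist_comm]; exact he1)
            _ = 2*r := by ring
        have hincl2 : radial ⁻¹' (closedBall e (2*r) ∩ sphere (0:E2) 1)
            ⊆ {x' : E2 | |(inner ℝ x' (rot e) : ℝ)| ≤ 2*r} ∪ K₀ᶜ := by
          intro z hz
          by_cases hzK : z ∈ K₀
          · left
            have hg := geom_inclusion E hE K₀ hK₀ e he (2*r) z hzK hz
            show |(inner ℝ z (rot e) : ℝ)| ≤ 2*r
            rw [abs_inner_rot e he z]
            exact hg
          · right; exact hzK
        calc Measure.map radial μ₀ (closedBall x r ∩ sphere (0:E2) 1)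
            ≤ Measure.map radial μ₀ (closedBall e (2*r) ∩ sphere (0:E2) 1) :=
              measure_mono hsub
          _ = μ₀ (radial ⁻¹' (closedBall e (2*r) ∩ sphere (0:E2) 1)) :=
              Measure.map_apply radial_meas (measurableSet_closedBall.inter hsphere_meas)
          _ ≤ μ₀ ({x' : E2 | |(inner ℝ x' (rot e) : ℝ)| ≤ 2*r} ∪ K₀ᶜ) := measure_mono hincl2
          _ ≤ μ₀ {x' : E2 | |(inner ℝ x' (rot e) : ℝ)| ≤ 2*r} + μ₀ K₀ᶜ := measure_union_le _ _
          _ = μ₀ {x' : E2 | |(inner ℝ x' (rot e) : ℝ)| ≤ 2*r} := by rw [hnull, add_zero]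
          _ ≤ ENNReal.ofReal (64 * C₁ / (1-s) * (2*r) ^ s) :=
              hFrost (rot e) (norm_rot e he) (2*r) (by positivity)
          _ ≤ ENNReal.ofReal (2*K * r^s) := by
              apply ENNReal.ofReal_le_ofReal
              have h2s : (2*r)^s = 2^s * r^s := Real.mul_rpow (by norm_num) hr.le
              have h22 : (2:ℝ)^s ≤ 2 := by
                calc (2:ℝ)^s ≤ (2:ℝ)^(1:ℝ) :=
                      Real.rpow_le_rpow_of_exponent_le (by norm_num) hs1.le
                  _ = 2 := Real.rpow_one _
              rw [h2s, ← hKd]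
              calc K * (2^s * r^s) = 2^s * (K * r^s) := by ring
                _ ≤ 2 * (K * r^s) := mul_le_mul_of_nonneg_right h22 (by positivity)
                _ = 2*K*r^s := by ring
    have hν_single : ∀ x : E2, ν {x} = 0 := by
      intro x
      have hb : ∀ n : ℕ, ν {x} ≤ ENNReal.ofReal (2*K * ((1:ℝ)/(n+1))^s) := by
        intro n
        refine le_trans (measure_mono ?_) (hν_ball x ((1:ℝ)/(n+1)) (by positivity))
        intro z hz
        rw [Set.mem_singleton_iff] at hz
        subst hz
        exact mem_closedBall_self (by positivity)
      have htend : Tendsto (fun n : ℕ => ENNReal.ofReal (2*K * ((1:ℝ)/(n+1))^s))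
          atTop (𝓝 0) := by
        have h2 : Tendsto (fun n : ℕ => ((1:ℝ)/(n+1))) atTop (𝓝 0) :=
          tendsto_one_div_add_atTop_nhds_zero_nat
        have h3 : Tendsto (fun u : ℝ => 2*K * u^s) (𝓝 0) (𝓝 0) := by
          have h4 : ContinuousAt (fun u : ℝ => u ^ s) 0 :=
            Real.continuousAt_rpow_const 0 s (Or.inr hs0.le)
          have h5 : Tendsto (fun u : ℝ => u^s) (𝓝 0) (𝓝 0) := by
            have := h4.tendsto
            rwa [Real.zero_rpow hs0.ne'] at this
          have := h5.const_mul (2*K)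
          rwa [mul_zero] at this
        have h6 := (h3.comp h2)
        rw [show (0:ℝ) = 2*K*(0:ℝ)^s by rw [Real.zero_rpow hs0.ne', mul_zero]] at h6
        have h7 := ENNReal.tendsto_ofReal h6
        rw [show ENNReal.ofReal (2*K*(0:ℝ)^s) = 0 by
          rw [Real.zero_rpow hs0.ne', mul_zero, ENNReal.ofReal_zero]] at h7
        exact h7
      have hle0 : ν {x} ≤ 0 := ge_of_tendsto htend (Filter.Eventually.of_forall hb)
      exact le_antisymm hle0 zero_le
    set cν := (ENNReal.ofReal (2*K))⁻¹ with hcν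
    have h2K0 : ENNReal.ofReal (2*K) ≠ 0 := by
      rw [Ne, ENNReal.ofReal_eq_zero, not_le]
      linarith
    have h2KT : ENNReal.ofReal (2*K) ≠ ⊤ := ENNReal.ofReal_ne_top
    have hmass : (cν • ν) ≤ μH[s] := by
      apply MeasureTheory.Measure.le_hausdorffMeasure s _ 1 one_pos
      intro A hdiam
      rcases Set.eq_empty_or_nonempty A with rfl | hA
      · simp
      · obtain ⟨x, hx⟩ := hA
        have hediam : ediam A ≠ ⊤ := by
          intro h; rw [h] at hdiam; exact absurd hdiam (by simp)
        have hbd : Bornology.IsBounded A := Metric.isBounded_iff_ediam_ne_top.2 hediam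
        set d := Metric.diam A with hd
        have hd0 : 0 ≤ d := Metric.diam_nonneg
        have hsub : A ⊆ closedBall x d := fun y hy =>
          mem_closedBall.2 (Metric.dist_le_diam_of_mem hbd hy hx)
        rcases hd0.eq_or_lt with heq | hpos
        · have hsing : A ⊆ {x} := by
            intro y hy
            have h := hsub hy
            rw [mem_closedBall, ← heq] at h
            rw [Set.mem_singleton_iff]
            exact dist_le_zero.1 h
          calc (cν • ν) A ≤ (cν • ν) {x} := measure_mono hsing
            _ = cν * ν {x} := by rw [Measure.smul_apply, smul_eq_mul]
            _ = 0 := by rw [hν_single x, mul_zero]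
            _ ≤ _ := zero_le
        · have hEd : ediam A = ENNReal.ofReal d := by
            rw [hd, Metric.diam]
            exact (ENNReal.ofReal_toReal hediam).symm
          calc (cν • ν) A = cν * ν A := by rw [Measure.smul_apply, smul_eq_mul]
            _ ≤ cν * ν (closedBall x d) := mul_le_mul_right (measure_mono hsub) _
            _ ≤ cν * ENNReal.ofReal (2*K*d^s) := mul_le_mul_right (hν_ball x d hpos) _
            _ = cν * (ENNReal.ofReal (2*K) * ENNReal.ofReal (d^s)) := by
                rw [← ENNReal.ofReal_mul (by positivity), mul_assoc]
            _ = ENNReal.ofReal (d^s) := by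
                rw [← mul_assoc, hcν, ENNReal.inv_mul_cancel h2K0 h2KT, one_mul]
            _ = ediam A ^ s := by
                rw [hEd, ENNReal.ofReal_rpow_of_pos hpos]
    obtain ⟨A, hEA, hAmeas, hAeq⟩ := exists_measurable_superset (μH[s]) E
    have hatom : μ₀ {(0:E2)} < 1 := atom_lt μ₀ ht₁0 hCpos hdecay
    have hν_pos : ν A ≠ 0 := by
      have h1 : ν A = μ₀ (radial ⁻¹' (A ∩ sphere (0:E2) 1)) := by
        rw [hν, Measure.restrict_apply hAmeas,
          Measure.map_apply radial_meas (hAmeas.inter hsphere_meas)]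
      have hpre_meas : MeasurableSet (radial ⁻¹' (A ∩ sphere (0:E2) 1)) :=
        radial_meas (hAmeas.inter hsphere_meas)
      have hcompl : (radial ⁻¹' (A ∩ sphere (0:E2) 1))ᶜ ⊆ K₀ᶜ ∪ {(0:E2)} := by
        intro z hz
        by_cases hzK : z ∈ K₀
        · right
          by_contra hz0
          apply hz
          rw [Set.mem_singleton_iff] at hz0
          rw [hK₀] at hzK
          obtain ⟨s', ⟨hs'0, hs'1⟩, u, huE, rfl⟩ := hzK
          have hu : ‖u‖ = 1 := mem_sphere_zero_iff_norm.1 (hE huE)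
          have hs'pos : 0 < s' := by
            rcases hs'0.eq_or_lt with h | h
            · exact absurd (by rw [← h, zero_smul]) hz0
            · exact h
          rw [Set.mem_preimage, radial_smul s' hs'pos u hu]
          exact ⟨hEA huE, mem_sphere_zero_iff_norm.2 hu⟩
        · left; exact hzK
      have h2 : μ₀ ((radial ⁻¹' (A ∩ sphere (0:E2) 1))ᶜ) < 1 := by
        calc μ₀ ((radial ⁻¹' (A ∩ sphere (0:E2) 1))ᶜ) ≤ μ₀ (K₀ᶜ ∪ {(0:E2)}) :=
              measure_mono hcompl
          _ ≤ μ₀ K₀ᶜ + μ₀ {(0:E2)} := measure_union_le _ _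
          _ = μ₀ {(0:E2)} := by rw [hnull, zero_add]
          _ < 1 := hatom
      rw [h1]
      intro h0
      have h3 := prob_compl_eq_one_sub (μ := μ₀) hpre_meas
      rw [h0, tsub_zero] at h3
      rw [h3] at h2
      exact lt_irrefl _ h2
    have hHE : μH[s] E ≠ 0 := by
      rw [← hAeq]
      intro h0
      have hle := Measure.le_iff'.1 hmass A
      rw [h0] at hle
      have hsm : (cν • ν) A = cν * ν A := by rw [Measure.smul_apply, smul_eq_mul]
      have hz : cν * ν A = 0 := le_antisymm (hsm ▸ hle) zero_le
      rcases mul_eq_zero.1 hz with h | h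
      · exact (ENNReal.inv_ne_zero.2 h2KT) h
      · exact hν_pos h
    have hdimge : ((s.toNNReal : ℝ≥0) : ℝ≥0∞) ≤ dimH E := by
      apply le_dimH_of_hausdorffMeasure_ne_zero
      rwa [Real.coe_toNNReal s hs0.le]
    rw [hdim] at hdimge
    have hst : s ≤ t := by
      rw [ENNReal.ofReal] at hdimge
      have h4 := ENNReal.coe_le_coe.1 hdimge
      exact (Real.toNNReal_le_toNNReal_iff ht.1.le).1 h4
    linarith
  refine ⟨?_, hpart2, ?_⟩
  · -- Part 1
    intro μ₀ hprob hnull e he r hr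
    haveI := hprob
    have hproj_cont : Continuous (projLine e) := by
      unfold projLine
      exact (continuous_const.add continuous_id).sub
        ((continuous_id.inner (𝕜 := ℝ) continuous_const).smul continuous_const)
    have hA : MeasurableSet (closedBall e r ∩ sphere (0:E2) 1) :=
      measurableSet_closedBall.inter hsphere_meas
    rw [Measure.map_apply radial_meas hA,
        Measure.map_apply hproj_cont.measurable measurableSet_closedBall]
    have hincl : radial ⁻¹' (closedBall e r ∩ sphere (0:E2) 1)
        ⊆ (projLine e ⁻¹' closedBall e r) ∪ K₀ᶜ := by
      intro x hx
      by_cases hxK : x ∈ K₀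
      · left
        have hg := geom_inclusion E hE K₀ hK₀ e he r x hxK hx
        show projLine e x ∈ closedBall e r
        rw [mem_closedBall, dist_eq_norm]
        have heq : projLine e x - e = x - ((inner ℝ x e : ℝ)) • e := by
          unfold projLine; abel
        rw [heq]
        exact hg
      · right; exact hxK
    calc μ₀ (radial ⁻¹' (closedBall e r ∩ sphere (0:E2) 1))
        ≤ μ₀ ((projLine e ⁻¹' closedBall e r) ∪ K₀ᶜ) := measure_mono hincl
      _ ≤ μ₀ (projLine e ⁻¹' closedBall e r) + μ₀ K₀ᶜ := measure_union_le _ _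
      _ = μ₀ (projLine e ⁻¹' closedBall e r) := by rw [hnull, add_zero]
  · -- Part 3
    apply Real.sSup_le _ (by linarith [ht.1] : (0:ℝ) ≤ 2*t)
    rintro x ⟨hx0, hx2, μ, hfin, hμ0, hμK, C, hdecayx⟩
    by_contra hgt
    push_neg at hgt
    apply hpart2
    haveI := hfin
    have huniv0 : μ Set.univ ≠ 0 := by
      intro h
      exact hμ0 (MeasureTheory.Measure.measure_univ_eq_zero.1 h)
    have hunivT : μ Set.univ ≠ ⊤ := measure_ne_top _ _
    set cc : ℝ≥0∞ := (μ Set.univ)⁻¹ with hcc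
    have hccR : 0 ≤ cc.toReal := ENNReal.toReal_nonneg
    have hμ'prob : IsProbabilityMeasure (cc • μ) :=
      ⟨by rw [Measure.smul_apply, smul_eq_mul, Set.univ, ← Set.univ]
          exact ENNReal.inv_mul_cancel huniv0 hunivT⟩
    refine ⟨cc • μ, x/2, max (cc.toReal * C) 1, hμ'prob, ?_, by linarith, ?_, ?_⟩
    · rw [Measure.smul_apply, hμK, smul_eq_mul, mul_zero]
    · exact lt_of_lt_of_le one_pos (le_max_right _ _)
    · intro ξ hξ
      have hmft : mFT (cc • μ) ξ = cc.toReal • mFT μ ξ := by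
        unfold mFT
        exact integral_smul_measure _ _
      have hrw : -x/2 = -(x/2) := by ring
      rw [hmft, norm_smul, Real.norm_eq_abs, abs_of_nonneg hccR]
      calc cc.toReal * ‖mFT μ ξ‖ ≤ cc.toReal * (C * ‖ξ‖ ^ (-x/2)) :=
            mul_le_mul_of_nonneg_left (hdecayx ξ hξ) hccR
        _ = (cc.toReal * C) * ‖ξ‖ ^ (-(x/2)) := by rw [← hrw]; ring
        _ ≤ max (cc.toReal * C) 1 * ‖ξ‖ ^ (-(x/2)) :=
            mul_le_mul_of_nonneg_right (le_max_left _ _) (Real.rpow_nonneg (norm_nonneg _) _)
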